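/- arXiv:2012.03412 — 6 statements merged into one kernel-verified Lean document; each statement's English description precedes it below -/
import Mathlib

section
/- (Lagrange inversion, coefficient form) Let \phi(t) be a formal power series with nonzero constant term and G(t) any formal power series. Then G(t) = \sum_{n\ge 0} a_n (t/\phi(t))^n where a_0 = G(0) and for n \ge 1, a_n = (1/n) [t^{n-1}] (G'(t) \phi(t)^n). -/
open PowerSeries Finset
noncomputable section

/-- Coefficient-wise composition `f ∘ g` of formal power series; this agrees with the
usual composition when `g` has zero constant term. -/
def scomp (f g : PowerSeries ℂ) : PowerSeries ℂ :=
  PowerSeries.mk fun N => ∑ n ∈ Finset.range (N + 1),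
    (PowerSeries.coeff n f) * (PowerSeries.coeff N (g ^ n))

/-- The exponential series `∑ t^n/n!`. -/
def expS : PowerSeries ℂ := PowerSeries.mk fun n => 1 / (n.factorial : ℂ)

/-- The series `log(1+t) = ∑_{n≥1} (-1)^{n+1} t^n / n`. -/
def logS : PowerSeries ℂ := PowerSeries.mk fun n => if n = 0 then 0 else (-1) ^ (n + 1) / (n : ℂ)

/-- Complex power `φ^q := exp (q · log φ)`, well defined when `φ` has constant term 1. -/
def cpow (φ : PowerSeries ℂ) (q : ℂ) : PowerSeries ℂ :=
  scomp expS (q • scomp logS (φ - 1))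

/-- Formal derivative. -/
def D (f : PowerSeries ℂ) : PowerSeries ℂ :=
  PowerSeries.mk fun n => ((n + 1 : ℕ) : ℂ) * PowerSeries.coeff (n + 1) f

/-- Generalized binomial coefficient `binom(t, k) = t(t-1)⋯(t-k+1)/k!`. -/
def gbinom (t : ℂ) (k : ℕ) : ℂ := (∏ j ∈ Finset.range k, (t - j)) / (k.factorial : ℂ)

/-- The ordinary Bell polynomial `B_{n,k}(x_1, …, x_{n-k+1})`. -/
def ordBell (n k : ℕ) (x : ℕ → ℂ) : ℂ :=
  ∑ i : Fin (n - k + 1) → Fin (n + 1),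
    if (∑ j, (i j : ℕ)) = k ∧ (∑ j, (j.1 + 1) * (i j : ℕ)) = n then
      ((k.factorial : ℂ) / ∏ j, ((i j : ℕ).factorial : ℂ)) * ∏ j, x (j.1 + 1) ^ (i j : ℕ)
    else 0

/-! The powers of `u = X φ⁻¹` form a triangular basis (`[X^N] u^N = φ(0)^{-N} ≠ 0`), so
`G = ∑ b_n u^n` coefficientwise for some `b`, and `[X^k] G' φ^{k+1}` only sees `b_0, …, b_{k+1}`.
Since `u^{n-1} φ^{n-1} = X^{n-1}`, we get `[X^k] (u^n)' φ^{k+1} = n [X^m] u' φ^{m+1}` with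
`m = k + 1 - n`. Differentiating `u φ = X` gives `φ u' = 1 - u φ'`, whence
`m [X^m] u' φ^{m+1} = m [X^m] φ^m - [X^m] X (φ^m)' = 0`, while `[X^0] u' φ = 1`. So only
`n = k + 1` survives, and `a_{k+1} = b_{k+1}`. -/

section TriangularSolve

variable {K : Type*} [Field K]

def triangularSolve (c : ℕ → ℕ → K) (g : ℕ → K) : ℕ → K
  | N => (g N - ∑ n ∈ (range N).attach, triangularSolve c g n * c N n) / c N N
  decreasing_by exact mem_range.mp n.2

theorem sum_triangularSolve_mul {c : ℕ → ℕ → K} (hc : ∀ N, c N N ≠ 0) (g : ℕ → K) (N : ℕ) :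
    ∑ n ∈ range (N + 1), triangularSolve c g n * c N n = g N := by
  rw [sum_range_succ, triangularSolve,
    sum_attach (range N) fun n => triangularSolve c g n * c N n, div_mul_cancel₀ _ (hc N)]
  ring

end TriangularSolve

section Derivative

variable {R : Type*}

theorem coeff_X_mul_derivative [CommSemiring R] (f : R⟦X⟧) (n : ℕ) :
    coeff n (X * d⁄dX R f) = n * coeff n f := by
  cases n with
  | zero => simp
  | succ n => rw [coeff_succ_X_mul, coeff_derivative, mul_comm]; push_cast; rfl

theorem X_pow_dvd_derivative [CommSemiring R] {f : R⟦X⟧} {n : ℕ} (h : X ^ (n + 1) ∣ f) :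
    X ^ n ∣ d⁄dX R f := by
  rw [X_pow_dvd_iff] at h ⊢
  intro m hm
  rw [coeff_derivative, h (m + 1) (by omega), zero_mul]

theorem coeff_derivative_mul_eq_of_X_pow_dvd_sub [CommRing R] {f g : R⟦X⟧} {n : ℕ}
    (h : X ^ (n + 2) ∣ f - g) (ψ : R⟦X⟧) :
    coeff n (d⁄dX R f * ψ) = coeff n (d⁄dX R g * ψ) := by
  rw [← sub_eq_zero, ← map_sub, ← sub_mul, ← map_sub]
  exact X_pow_dvd_iff.mp (dvd_mul_of_dvd_left (X_pow_dvd_derivative h) ψ) n n.lt_succ_self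

end Derivative

section LagrangeInversion

variable {K : Type*} [Field K] {φ : K⟦X⟧}

theorem X_mul_inv_mul_self (hφ : constantCoeff φ ≠ 0) : X * φ⁻¹ * φ = X := by
  rw [mul_assoc, PowerSeries.inv_mul_cancel φ hφ, mul_one]

theorem coeff_X_mul_inv_pow (φ : K⟦X⟧) (n N : ℕ) :
    coeff N ((X * φ⁻¹) ^ n) = if n ≤ N then coeff (N - n) (φ⁻¹ ^ n) else 0 := by
  rw [mul_pow, coeff_X_pow_mul']

theorem coeff_X_mul_inv_pow_self_ne_zero (hφ : constantCoeff φ ≠ 0) (N : ℕ) :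
    coeff N ((X * φ⁻¹) ^ N) ≠ 0 := by
  rw [coeff_X_mul_inv_pow, if_pos le_rfl, Nat.sub_self, coeff_zero_eq_constantCoeff, map_pow,
    constantCoeff_inv]
  exact pow_ne_zero _ (inv_ne_zero hφ)

theorem exists_coeff_eq_sum_coeff_X_mul_inv_pow (hφ : constantCoeff φ ≠ 0) (G : K⟦X⟧) :
    ∃ b : ℕ → K, ∀ N, coeff N G = ∑ n ∈ range (N + 1), b n * coeff N ((X * φ⁻¹) ^ n) :=
  ⟨triangularSolve (fun N n => coeff N ((X * φ⁻¹) ^ n)) (coeff · G),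
    fun N => (sum_triangularSolve_mul (c := fun N n => coeff N ((X * φ⁻¹) ^ n))
      (coeff_X_mul_inv_pow_self_ne_zero hφ) (coeff · G) N).symm⟩

theorem X_pow_dvd_sub_sum_C_mul_X_mul_inv_pow {G : K⟦X⟧} {b : ℕ → K}
    (hb : ∀ N, coeff N G = ∑ n ∈ range (N + 1), b n * coeff N ((X * φ⁻¹) ^ n)) (M : ℕ) :
    X ^ M ∣ G - ∑ n ∈ range M, C (b n) * (X * φ⁻¹) ^ n := by
  refine X_pow_dvd_iff.mpr fun N hN => ?_
  rw [map_sub, sub_eq_zero, hb N, map_sum]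
  simp only [coeff_C_mul]
  refine sum_subset (range_subset_range.mpr (by omega)) fun n _ hn => ?_
  rw [coeff_X_mul_inv_pow, if_neg (by simpa using hn), mul_zero]

variable [CharZero K]

theorem coeff_derivative_X_mul_inv_mul_pow (hφ : constantCoeff φ ≠ 0) (m : ℕ) :
    coeff m (d⁄dX K (X * φ⁻¹) * φ ^ (m + 1)) = if m = 0 then 1 else 0 := by
  set u := X * φ⁻¹
  have hD : φ * d⁄dX K u = 1 - u * d⁄dX K φ := by
    have := congrArg (d⁄dX K) (X_mul_inv_mul_self hφ)
    rw [Derivation.leibniz, derivative_X, smul_eq_mul, smul_eq_mul] at this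
    linear_combination this
  cases m with
  | zero =>
    have hu0 : constantCoeff u = 0 := by simp [u]
    rw [if_pos rfl, zero_add, pow_one, mul_comm, hD, map_sub, coeff_zero_eq_constantCoeff_apply,
      coeff_zero_eq_constantCoeff_apply, map_mul, hu0, zero_mul, map_one, sub_zero]
  | succ m =>
    have h : C ((m + 1 : ℕ) : K) * (d⁄dX K u * φ ^ (m + 2)) =
        C ((m + 1 : ℕ) : K) * φ ^ (m + 1) - X * d⁄dX K (φ ^ (m + 1)) := by
      rw [derivative_pow, ← X_mul_inv_mul_self hφ, Nat.add_sub_cancel, ← map_natCast C]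
      linear_combination C ((m + 1 : ℕ) : K) * φ ^ (m + 1) * hD
    have hcoeff := congrArg (coeff (m + 1)) h
    rw [coeff_C_mul, map_sub, coeff_C_mul, coeff_X_mul_derivative, sub_self] at hcoeff
    rw [if_neg m.succ_ne_zero]
    exact (mul_eq_zero.mp hcoeff).resolve_left (by exact_mod_cast m.succ_ne_zero)

theorem coeff_derivative_X_mul_inv_pow_mul_pow (hφ : constantCoeff φ ≠ 0) {n k : ℕ}
    (hn : n ≤ k + 1) :
    coeff k (d⁄dX K ((X * φ⁻¹) ^ n) * φ ^ (k + 1)) =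
      if n = k + 1 then (k + 1 : K) else 0 := by
  rcases n with _ | n
  · simp
  obtain ⟨j, rfl⟩ : ∃ j, k = n + j := ⟨k - n, by omega⟩
  have hXn : (X * φ⁻¹) ^ n * φ ^ n = X ^ n := by rw [← mul_pow, X_mul_inv_mul_self hφ]
  have h : d⁄dX K ((X * φ⁻¹) ^ (n + 1)) * φ ^ (n + j + 1) =
      C ((n + 1 : ℕ) : K) * (X ^ n * (d⁄dX K (X * φ⁻¹) * φ ^ (j + 1))) := by
    rw [derivative_pow, Nat.add_sub_cancel, ← map_natCast C, ← hXn]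
    ring
  rw [h, coeff_C_mul, add_comm n j, coeff_X_pow_mul, coeff_derivative_X_mul_inv_mul_pow hφ]
  rcases j with _ | j <;> simp

theorem coeff_derivative_mul_pow_of_coeff_eq_sum (hφ : constantCoeff φ ≠ 0) {G : K⟦X⟧}
    {b : ℕ → K} (hb : ∀ N, coeff N G = ∑ n ∈ range (N + 1), b n * coeff N ((X * φ⁻¹) ^ n))
    (k : ℕ) :
    coeff k (d⁄dX K G * φ ^ (k + 1)) = (k + 1) * b (k + 1) := by
  rw [coeff_derivative_mul_eq_of_X_pow_dvd_sub
    (X_pow_dvd_sub_sum_C_mul_X_mul_inv_pow hb (k + 2)), map_sum, sum_mul, map_sum]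
  simp only [Derivation.leibniz, derivative_C, smul_eq_mul, mul_zero, add_zero, mul_assoc,
    coeff_C_mul]
  rw [sum_congr rfl fun n hn => by
    rw [coeff_derivative_X_mul_inv_pow_mul_pow hφ (by simp at hn; omega)]]
  simp [mul_comm]

end LagrangeInversion

theorem D_eq_derivative (f : ℂ⟦X⟧) : D f = d⁄dX ℂ f := by
  ext n
  rw [D, coeff_mk, coeff_derivative, mul_comm]
  push_cast
  rfl

/-- The Lagrange inversion formula in coefficient form:
`G(t) = ∑_{n≥0} a_n (t/φ(t))^n` with `a_0 = G(0)` and `a_n = (1/n)[t^{n-1}](G'(t) φ(t)^n)`. -/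
theorem stmt2 (φ G : PowerSeries ℂ) (hφ : PowerSeries.constantCoeff φ ≠ 0)
    (a : ℕ → ℂ) (ha0 : a 0 = PowerSeries.constantCoeff G)
    (ha : ∀ n : ℕ, 1 ≤ n →
      a n = (1 / (n : ℂ)) * PowerSeries.coeff (n - 1) (D G * φ ^ n)) :
    ∀ N : ℕ, PowerSeries.coeff N G =
      ∑ n ∈ Finset.range (N + 1),
        a n * PowerSeries.coeff N ((PowerSeries.X * φ⁻¹) ^ n) := by
  obtain ⟨b, hb⟩ := exists_coeff_eq_sum_coeff_X_mul_inv_pow hφ G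
  have hab : a = b := by
    funext n
    rcases n with _ | k
    · simpa [ha0] using hb 0
    · rw [ha (k + 1) k.succ_pos, Nat.add_sub_cancel, D_eq_derivative,
        coeff_derivative_mul_pow_of_coeff_eq_sum hφ hb]
      push_cast
      field_simp
  exact hab ▸ hb
end
end

section
/- Let p be a nonzero complex number, m \ge 1, and let a_1,...,a_m, q_1,...,q_m be complex numbers with \sum a_k = 0 and \sum a_k q_k \ne 0. Suppose F(t) = \sum_{n\ge 1} x_n t^n and \phi(t) = 1 + \sum_{n\ge 1} y_n t^n satisfy F(t/\phi(t)^p) = \sum_{k=1}^m a_k \phi(t)^{q_k}. Then for all n \ge 1, x_n = \sum_{k=1}^n (\sum_{i=1}^m (a_i q_i / (np+q_i)) binom(np+q_i, k)) B_{n,k}(y_1,...,y_{n-k+1}). -/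
open PowerSeries Finset
noncomputable section

/-!
Put `w = X φ^(-p)`, so that `F(w) = G := ∑ aᵢ φ^(qᵢ)`. Lagrange inversion in residue form: the
`X^M`-coefficient of `(w^j)' · (X / w)^(M+1) = (w^j)' · φ^((M+1)p)` is `(M+1) δ_{j,M+1}`, hence
`(M+1) x_{M+1} = [X^M] G' φ^((M+1)p)`.

The powers `φ^r = exp (r log φ)` are characterised by the differential equation
`φ (φ^r)' = r φ' φ^r` with constant term `1`. This gives `φ^r φ^s = φ^(r+s)`,
`(φ^q)' φ^u = q / (q+u) · (φ^(q+u))'` and the binomial expansion `φ^r = ∑ₖ binom(r,k) (φ-1)^k`.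
Finally `[X^n] (φ-1)^k = B_{n,k}(y)` by the multinomial theorem.
-/

lemma coeff_scomp (f g : ℂ⟦X⟧) (N : ℕ) :
    coeff N (scomp f g) = ∑ n ∈ range (N + 1), coeff n f * coeff N (g ^ n) :=
  coeff_mk _ _

lemma constantCoeff_scomp (f g : ℂ⟦X⟧) : constantCoeff (scomp f g) = constantCoeff f := by
  rw [← coeff_zero_eq_constantCoeff_apply, coeff_scomp]
  simp

lemma coeff_pow_of_lt {R : Type*} [CommRing R] {g : R⟦X⟧} (hg : constantCoeff g = 0) {m j : ℕ}
    (h : m < j) : coeff m (g ^ j) = 0 :=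
  X_pow_dvd_iff.mp (pow_dvd_pow_of_dvd (X_dvd_iff.mpr hg) j) m h

lemma scomp_eq_subst {f g : ℂ⟦X⟧} (hg : constantCoeff g = 0) : scomp f g = f.subst g := by
  ext N
  rw [coeff_scomp, coeff_subst' (HasSubst.of_constantCoeff_zero' hg),
    finsum_eq_sum_of_support_subset _ (s := range (N + 1))]
  · simp only [smul_eq_mul]
  · intro n hn
    by_contra h
    simp only [coe_range, Set.mem_Iio, not_lt] at h
    exact hn (by simp only [coeff_pow_of_lt hg (Nat.lt_of_succ_le h), smul_zero])

lemma coeff_derivative_scomp_mul {g : ℂ⟦X⟧} (hg : constantCoeff g = 0) (F v : ℂ⟦X⟧) (M : ℕ) :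
    coeff M (d⁄dX ℂ (scomp F g) * v)
      = ∑ n ∈ range (M + 2), coeff n F * coeff M (d⁄dX ℂ (g ^ n) * v) := by
  have hcoeff : ∀ i ≤ M, coeff i (d⁄dX ℂ (scomp F g))
      = ∑ n ∈ range (M + 2), coeff n F * coeff i (d⁄dX ℂ (g ^ n)) := by
    intro i hi
    rw [coeff_derivative, coeff_scomp, sum_mul,
      ← sum_subset (range_subset_range.mpr (by omega : i + 2 ≤ M + 2))]
    · exact sum_congr rfl fun n _ => by rw [coeff_derivative, mul_assoc]
    · intro n _ hn
      rw [mem_range, not_lt] at hn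
      rw [coeff_derivative, coeff_pow_of_lt hg (by omega), zero_mul, mul_zero]
  rw [coeff_mul, sum_congr rfl fun ij hij => by
    rw [hcoeff ij.1 (by linarith [mem_antidiagonal.mp hij]), sum_mul], sum_comm]
  refine sum_congr rfl fun n _ => ?_
  rw [coeff_mul, mul_sum]
  exact sum_congr rfl fun ij _ => mul_assoc _ _ _

lemma one_add_X_mul_derivative_log {A : Type*} [CommRing A] [Algebra ℚ A] :
    (1 + X : A⟦X⟧) * d⁄dX A (log A) = 1 := by
  ext n
  rw [deriv_log, add_mul, one_mul, map_add]
  cases n with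
  | zero => simp
  | succ n => simp [coeff_succ_X_mul, pow_succ]

lemma one_add_mul_subst_derivative_log {A : Type*} [CommRing A] [Algebra ℚ A] {ψ : A⟦X⟧}
    (hψ : HasSubst ψ) : (1 + ψ) * (d⁄dX A (log A)).subst ψ = 1 := by
  simpa [← coe_substAlgHom hψ, substAlgHom_X] using
    congrArg (substAlgHom (R := A) hψ) one_add_X_mul_derivative_log

lemma eq_of_mul_derivative_eq {K : Type*} [Field K] [CharZero K] {a b u v : K⟦X⟧}
    (ha : constantCoeff a ≠ 0) (hu : a * d⁄dX K u = b * u) (hv : a * d⁄dX K v = b * v)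
    (h0 : constantCoeff u = constantCoeff v) : u = v := by
  have hode : ∀ w, a * d⁄dX K w = b * w → d⁄dX K w = (a⁻¹ * b) * w := fun w hw => by
    rw [mul_assoc, ← hw, ← mul_assoc, PowerSeries.inv_mul_cancel _ ha, one_mul]
  ext N
  induction N using Nat.strong_induction_on with
  | _ N ih =>
    cases N with
    | zero => simpa using h0
    | succ N =>
      have hN : coeff N (d⁄dX K u) = coeff N (d⁄dX K v) := by
        rw [hode u hu, hode v hv, coeff_mul, coeff_mul]
        refine sum_congr rfl fun ij hij => ?_
        rw [ih ij.2 (by linarith [mem_antidiagonal.mp hij])]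
      rw [coeff_derivative, coeff_derivative] at hN
      exact mul_right_cancel₀ (Nat.cast_add_one_ne_zero N) hN

lemma coeff_X_pow_succ_mul_derivative {R : Type*} [CommRing R] (g : R⟦X⟧) (M i : ℕ) :
    coeff M (X ^ (i + 1) * d⁄dX R g) = ((M : R) - i) * coeff M (X ^ i * g) := by
  rw [coeff_X_pow_mul', coeff_X_pow_mul']
  rcases lt_trichotomy i M with h | rfl | h
  · obtain ⟨k, rfl⟩ := Nat.exists_eq_add_of_lt h
    rw [if_pos (by omega), if_pos (by omega), coeff_derivative,
      show i + k + 1 - (i + 1) + 1 = i + k + 1 - i by omega, mul_comm]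
    congr 1
    rw [show i + k + 1 - (i + 1) = k by omega]
    push_cast
    ring
  · simp
  · rw [if_neg (by omega), if_neg (by omega), mul_zero]

lemma gbinom_zero (r : ℂ) : gbinom r 0 = 1 := by simp [gbinom]

lemma succ_mul_gbinom_succ (r : ℂ) (k : ℕ) :
    (k + 1 : ℂ) * gbinom r (k + 1) = (r - k) * gbinom r k := by
  rw [gbinom, gbinom, prod_range_succ, Nat.factorial_succ, Nat.cast_mul]
  have : (k.factorial : ℂ) ≠ 0 := Nat.cast_ne_zero.mpr k.factorial_ne_zero
  field_simp
  push_cast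
  ring

lemma one_add_X_mul_derivative_mk_gbinom (r : ℂ) :
    (1 + X : ℂ⟦X⟧) * d⁄dX ℂ (PowerSeries.mk (gbinom r)) = r • PowerSeries.mk (gbinom r) := by
  ext n
  rw [add_mul, one_mul, map_add, coeff_derivative, coeff_mk, map_smul, coeff_mk, smul_eq_mul]
  cases n with
  | zero => simpa [gbinom_zero] using succ_mul_gbinom_succ r 0
  | succ n =>
    rw [coeff_succ_X_mul, coeff_derivative, coeff_mk]
    push_cast
    linear_combination (norm := (push_cast; ring)) succ_mul_gbinom_succ r (n + 1)

lemma constantCoeff_cpow (φ : ℂ⟦X⟧) (q : ℂ) : constantCoeff (cpow φ q) = 1 := by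
  rw [cpow, constantCoeff_scomp, ← coeff_zero_eq_constantCoeff_apply]
  simp [expS]

lemma cpow_zero (φ : ℂ⟦X⟧) : cpow φ 0 = 1 := by
  ext N
  rw [cpow, zero_smul, coeff_scomp, sum_eq_single 0]
  · simp [expS]
  · intro n _ hn
    rw [zero_pow hn, map_zero, mul_zero]
  · simp

section cpow

variable {φ : ℂ⟦X⟧} (hφ : constantCoeff φ = 1)
include hφ

lemma cpow_eq_subst (q : ℂ) : cpow φ q = (exp ℂ).subst (q • logOf φ) := by
  have hexp : expS = exp ℂ := by ext n; simp [expS, coeff_exp]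
  have hlog : scomp logS (φ - 1) = logOf φ := by
    rw [scomp_eq_subst (by rw [map_sub, hφ, map_one, sub_self]), logOf_eq]
    congr 1
    ext n
    simp [logS, coeff_log]
  rw [cpow, hlog, hexp, scomp_eq_subst]
  rw [smul_eq_C_mul, map_mul, constantCoeff_logOf hφ, mul_zero]

lemma mul_derivative_cpow (q : ℂ) : φ * d⁄dX ℂ (cpow φ q) = q • (d⁄dX ℂ φ * cpow φ q) := by
  have hψ : HasSubst (φ - 1) := HasSubst.of_constantCoeff_zero' (by simp [hφ])
  have hL : HasSubst (q • logOf φ) := HasSubst.of_constantCoeff_zero' (by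
    rw [smul_eq_C_mul, map_mul, constantCoeff_logOf hφ, mul_zero])
  have hlog := one_add_mul_subst_derivative_log hψ
  rw [add_sub_cancel] at hlog
  rw [cpow_eq_subst hφ, derivative_subst hL, derivative_exp, Derivation.map_smul, logOf_eq,
    derivative_subst hψ, map_sub, derivative_one, sub_zero]
  simp only [smul_eq_C_mul]
  linear_combination (C q * (exp ℂ).subst (C q * (log ℂ).subst (φ - 1)) * d⁄dX ℂ φ) * hlog

lemma cpow_add (r s : ℂ) : cpow φ r * cpow φ s = cpow φ (r + s) := by
  refine eq_of_mul_derivative_eq (a := φ) (b := (r + s) • d⁄dX ℂ φ) (by simp [hφ]) ?_ ?_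
    (by simp [constantCoeff_cpow])
  · have hr := mul_derivative_cpow hφ r
    have hs := mul_derivative_cpow hφ s
    simp only [smul_eq_C_mul, map_add] at hr hs ⊢
    rw [Derivation.leibniz, smul_eq_mul, smul_eq_mul]
    linear_combination cpow φ r * hs + cpow φ s * hr
  · rw [mul_derivative_cpow hφ, smul_mul_assoc, mul_comm]

lemma cpow_natCast_mul (r : ℂ) (j : ℕ) : cpow φ r ^ j = cpow φ (j * r) := by
  induction j with
  | zero => simp [cpow_zero]
  | succ j ih => rw [pow_succ, ih, cpow_add hφ]; push_cast; ring_nf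

lemma inv_cpow (r : ℂ) : (cpow φ r)⁻¹ = cpow φ (-r) := by
  rw [PowerSeries.inv_eq_iff_mul_eq_one (by simp [constantCoeff_cpow]), cpow_add hφ,
    neg_add_cancel, cpow_zero]

lemma cpow_eq_scomp_mk_gbinom (r : ℂ) : cpow φ r = scomp (PowerSeries.mk (gbinom r)) (φ - 1) := by
  have hψ : HasSubst (φ - 1) := HasSubst.of_constantCoeff_zero' (by simp [hφ])
  have hB := congrArg (substAlgHom (R := ℂ) hψ) (one_add_X_mul_derivative_mk_gbinom r)
  simp only [map_mul, map_add, map_one, map_smul, coe_substAlgHom, substAlgHom_X,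
    add_sub_cancel] at hB
  refine eq_of_mul_derivative_eq (a := φ) (b := r • d⁄dX ℂ φ) (by simp [hφ])
    (by rw [mul_derivative_cpow hφ r, smul_mul_assoc]) ?_ ?_
  · rw [scomp_eq_subst (by simp [hφ]), derivative_subst hψ, map_sub, derivative_one, sub_zero,
      ← mul_assoc, hB, smul_mul_assoc, smul_mul_assoc, mul_comm]
  · rw [constantCoeff_cpow, constantCoeff_scomp, ← coeff_zero_eq_constantCoeff_apply, coeff_mk,
      gbinom_zero]

lemma coeff_cpow (r : ℂ) (N : ℕ) :
    coeff N (cpow φ r) = ∑ k ∈ range (N + 1), gbinom r k * coeff N ((φ - 1) ^ k) := by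
  rw [cpow_eq_scomp_mk_gbinom hφ, coeff_scomp]
  simp only [coeff_mk]

lemma smul_derivative_cpow_mul_cpow {a b r u : ℂ} (h : a * r = b * (r + u)) :
    a • (d⁄dX ℂ (cpow φ r) * cpow φ u) = b • d⁄dX ℂ (cpow φ (r + u)) := by
  refine mul_left_cancel₀ (a := φ) (fun h0 => by simp [h0] at hφ) ?_
  have e1 := mul_derivative_cpow hφ r
  have e2 := mul_derivative_cpow hφ (r + u)
  have e4 : C a * C r = C b * C (r + u) := by rw [← map_mul, ← map_mul, h]
  simp only [smul_eq_C_mul] at e1 e2 ⊢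
  linear_combination C a * cpow φ u * e1 - C b * e2
    + C a * C r * d⁄dX ℂ φ * cpow_add hφ r u + d⁄dX ℂ φ * cpow φ (r + u) * e4

lemma coeff_derivative_cpow_mul_cpow {r u : ℂ} (h : u + r ≠ 0) (M : ℕ) :
    coeff M (d⁄dX ℂ (cpow φ r) * cpow φ u)
      = r / (u + r) * ((M + 1) * coeff (M + 1) (cpow φ (u + r))) := by
  have key := congrArg (coeff M)
    (smul_derivative_cpow_mul_cpow hφ (a := u + r) (b := r) (r := r) (u := u) (by ring))
  rw [map_smul, map_smul, coeff_derivative, smul_eq_mul, smul_eq_mul, add_comm r] at key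
  rw [div_mul_eq_mul_div, eq_div_iff h]
  linear_combination key

lemma coeff_derivative_pow_mul_cpow (p : ℂ) (M i : ℕ) :
    coeff M (d⁄dX ℂ ((X * cpow φ (-p)) ^ (i + 1)) * cpow φ ((M + 1) * p))
      = if i = M then (M + 1 : ℂ) else 0 := by
  set c := cpow φ (-((i + 1) * p))
  set v := cpow φ ((M + 1) * p)
  set g := cpow φ ((M - i) * p)
  have hg : -((i + 1) * p) + (M + 1) * p = (M - i) * p := by ring
  have hcg : (M - i : ℂ) • (d⁄dX ℂ c * v) = -(i + 1 : ℂ) • d⁄dX ℂ g := by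
    rw [smul_derivative_cpow_mul_cpow hφ (b := -(i + 1)) (by ring), hg]
  have hE : d⁄dX ℂ ((X * cpow φ (-p)) ^ (i + 1)) * v
      = (i + 1 : ℂ) • (X ^ i * g) + X ^ (i + 1) * (d⁄dX ℂ c * v) := by
    have hw : (X * cpow φ (-p)) ^ (i + 1) = X ^ (i + 1) * c := by
      rw [mul_pow, cpow_natCast_mul hφ]
      congr 2
      push_cast
      ring
    have hcv : c * v = g := by rw [cpow_add hφ, hg]
    clear_value c v g
    rw [hw, Derivation.leibniz, derivative_pow, derivative_X, Nat.add_sub_cancel, ← hcv]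
    simp only [smul_eq_mul, smul_eq_C_mul, ← map_natCast C]
    push_cast
    ring
  split_ifs with hiM
  · subst hiM
    rw [hE, map_add, map_smul, coeff_X_pow_mul', if_pos le_rfl, Nat.sub_self,
      coeff_zero_eq_constantCoeff_apply, constantCoeff_cpow, coeff_X_pow_mul', if_neg (by omega)]
    simp
  · have hMi : (M - i : ℂ) ≠ 0 := sub_ne_zero.mpr (by exact_mod_cast (Ne.symm hiM))
    have hres : (M - i : ℂ) • (d⁄dX ℂ ((X * cpow φ (-p)) ^ (i + 1)) * v)
        = (i + 1 : ℂ) • ((M - i : ℂ) • (X ^ i * g) - X ^ (i + 1) * d⁄dX ℂ g) := by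
      rw [hE]
      simp only [smul_eq_C_mul, map_neg] at hcg ⊢
      linear_combination X ^ (i + 1) * hcg
    refine (mul_eq_zero.mp ?_).resolve_left hMi
    rw [← smul_eq_mul, ← map_smul, hres, map_smul, map_sub, map_smul,
      coeff_X_pow_succ_mul_derivative]
    simp only [smul_eq_mul, sub_self, mul_zero]

lemma coeff_derivative_scomp_mul_cpow (p : ℂ) (F : ℂ⟦X⟧) (M : ℕ) :
    coeff M (d⁄dX ℂ (scomp F (X * cpow φ (-p))) * cpow φ ((M + 1) * p))
      = (M + 1) * coeff (M + 1) F := by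
  rw [coeff_derivative_scomp_mul (by simp), sum_range_succ', sum_eq_single M]
  · rw [coeff_derivative_pow_mul_cpow hφ, if_pos rfl, pow_zero, derivative_one, zero_mul,
      map_zero, mul_zero, add_zero, mul_comm]
  · intro n _ hn
    rw [coeff_derivative_pow_mul_cpow hφ, if_neg hn, mul_zero]
  · simp

end cpow

lemma mul_pow_dvd_pow_succ_sub_pow_succ {R : Type*} [CommRing R] {a b f g : R} (hf : a ∣ f)
    (hg : a ∣ g) (hfg : b ∣ f - g) (k : ℕ) : b * a ^ k ∣ f ^ (k + 1) - g ^ (k + 1) := by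
  rw [← geom_sum₂_mul, mul_comm b]
  refine mul_dvd_mul (dvd_sum fun i hi => ?_) hfg
  have hik : i + (k + 1 - 1 - i) = k := by rw [mem_range] at hi; omega
  have h := mul_dvd_mul (pow_dvd_pow_of_dvd hf i) (pow_dvd_pow_of_dvd hg (k + 1 - 1 - i))
  rwa [← pow_add, hik] at h

lemma Nat.cast_multinomial {K ι : Type*} [Field K] [CharZero K] (s : Finset ι) (c : ι → ℕ) :
    (Nat.multinomial s c : K) =
      ((∑ i ∈ s, c i).factorial : K) / ∏ i ∈ s, ((c i).factorial : K) := by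
  rw [eq_div_iff (prod_ne_zero_iff.mpr fun j _ => Nat.cast_ne_zero.mpr (c j).factorial_ne_zero),
    mul_comm]
  exact_mod_cast Nat.multinomial_spec s c

lemma coeff_sum_C_mul_X_pow_pow {R : Type*} [CommRing R] {L : ℕ} (y : ℕ → R) (K N : ℕ) :
    coeff N ((∑ j : Fin L, C (y ((j : ℕ) + 1)) * X ^ ((j : ℕ) + 1)) ^ K)
      = ∑ c ∈ piAntidiag univ K, if ∑ j : Fin L, ((j : ℕ) + 1) * c j = N then
          (Nat.multinomial univ c : R) * ∏ j : Fin L, y ((j : ℕ) + 1) ^ c j else 0 := by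
  rw [sum_pow_eq_sum_piAntidiag, map_sum]
  refine sum_congr rfl fun c _ => ?_
  simp_rw [mul_pow, ← map_pow, ← pow_mul, prod_mul_distrib, ← map_prod, prod_pow_eq_pow_sum,
    ← map_natCast C, ← mul_assoc, ← map_mul, coeff_C_mul, coeff_X_pow]
  simp only [mul_ite, mul_one, mul_zero, eq_comm]

lemma ordBell_eq_sum_piAntidiag (y : ℕ → ℂ) {N K : ℕ} (hKN : K ≤ N) :
    ordBell N K y = ∑ c ∈ piAntidiag univ K,
      if ∑ j : Fin (N - K + 1), ((j : ℕ) + 1) * c j = N then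
        (Nat.multinomial univ c : ℂ) * ∏ j : Fin (N - K + 1), y ((j : ℕ) + 1) ^ c j else 0 := by
  set G : (Fin (N - K + 1) → ℕ) → ℂ := fun c =>
    if ∑ j, c j = K ∧ ∑ j : Fin (N - K + 1), ((j : ℕ) + 1) * c j = N then
      ((K.factorial : ℂ) / ∏ j, ((c j).factorial : ℂ)) *
        ∏ j : Fin (N - K + 1), y ((j : ℕ) + 1) ^ c j
    else 0
  set val : (Fin (N - K + 1) → Fin (N + 1)) → Fin (N - K + 1) → ℕ := fun i j => i j
  have hval : Function.Injective val := fun i i' h => funext fun j => Fin.ext (congrFun h j)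
  have hsub : piAntidiag univ K ⊆ univ.image val := by
    intro c hc
    rw [mem_piAntidiag] at hc
    refine mem_image.mpr ⟨fun j => ⟨c j, Nat.lt_succ_of_le ?_⟩, mem_univ _, rfl⟩
    calc c j ≤ ∑ j, c j := single_le_sum (fun j _ => Nat.zero_le (c j)) (mem_univ j)
      _ = K := hc.1
      _ ≤ N := hKN
  calc ordBell N K y = ∑ i, G (val i) := rfl
    _ = ∑ c ∈ univ.image val, G c := (sum_image fun i _ i' _ h => hval h).symm
    _ = ∑ c ∈ piAntidiag univ K, G c := by
        refine (sum_subset hsub fun c _ hc => if_neg fun h => hc ?_).symm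
        exact mem_piAntidiag.mpr ⟨h.1, by simp⟩
    _ = _ := by
        refine sum_congr rfl fun c hc => ?_
        have hcK : ∑ j, c j = K := (mem_piAntidiag.mp hc).1
        simp only [G, hcK, true_and, Nat.cast_multinomial]

lemma coeff_pow_eq_ordBell (y : ℕ → ℂ) {N K : ℕ} (hK : 1 ≤ K) (hKN : K ≤ N) :
    coeff N ((PowerSeries.mk fun n => if n = 0 then 0 else y n) ^ K) = ordBell N K y := by
  set ψ : ℂ⟦X⟧ := PowerSeries.mk fun n => if n = 0 then 0 else y n
  set S : ℂ⟦X⟧ := ∑ j : Fin (N - K + 1), C (y ((j : ℕ) + 1)) * X ^ ((j : ℕ) + 1)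
  have hψ : X ∣ ψ := X_dvd_iff.mpr (by simp [ψ, ← coeff_zero_eq_constantCoeff_apply])
  have hS : X ∣ S := dvd_sum fun j _ => (dvd_pow_self X (Nat.succ_ne_zero j)).mul_left _
  have hψS : X ^ (N - K + 2) ∣ ψ - S := by
    refine X_pow_dvd_iff.mpr fun n hn => ?_
    rw [map_sub, map_sum, sub_eq_zero]
    simp only [coeff_C_mul, coeff_X_pow, mul_ite, mul_one, mul_zero, ψ, coeff_mk]
    rcases n with _ | n
    · simp
    · rw [if_neg n.succ_ne_zero, Fintype.sum_eq_single ⟨n, by omega⟩ fun j hj => if_neg ?_,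
        if_pos rfl]
      exact fun h => hj (Fin.ext (Nat.succ_injective h.symm))
  obtain ⟨k, rfl⟩ := Nat.exists_eq_add_of_le' hK
  have hdvd := mul_pow_dvd_pow_succ_sub_pow_succ hψ hS hψS k
  rw [← pow_add, X_pow_dvd_iff] at hdvd
  have hcoeff : coeff N (ψ ^ (k + 1)) = coeff N (S ^ (k + 1)) :=
    sub_eq_zero.mp (by simpa using hdvd N (by omega))
  rw [hcoeff, coeff_sum_C_mul_X_pow_pow, ordBell_eq_sum_piAntidiag y hKN]

lemma coeff_cpow_eq_sum_ordBell (y : ℕ → ℂ) (r : ℂ) {n : ℕ} (hn : 1 ≤ n) :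
    coeff n (cpow (PowerSeries.mk fun n => if n = 0 then 1 else y n) r)
      = ∑ k ∈ Icc 1 n, gbinom r k * ordBell n k y := by
  have hψ : (PowerSeries.mk fun n => if n = 0 then 1 else y n) - 1
      = PowerSeries.mk fun n => if n = 0 then 0 else y n := by
    ext k
    rcases k with _ | k <;> simp [coeff_one]
  rw [coeff_cpow (by simp [← coeff_zero_eq_constantCoeff_apply]), hψ,
    sum_range_eq_add_Ico _ (by omega : 0 < n + 1), Ico_add_one_right_eq_Icc, pow_zero, coeff_one,
    if_neg (by omega), mul_zero, zero_add]
  exact sum_congr rfl fun k hk => by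
    rw [mem_Icc] at hk
    rw [coeff_pow_eq_ordBell y hk.1 hk.2]

theorem stmt3_general (m : ℕ) (p : ℂ) (a q : ℕ → ℂ)
    (hnp : ∀ n : ℕ, 1 ≤ n → ∀ i ∈ Finset.Icc 1 m, (n : ℂ) * p + q i ≠ 0)
    (x y : ℕ → ℂ) (F φ : PowerSeries ℂ)
    (hF : F = PowerSeries.mk fun n => if n = 0 then 0 else x n)
    (hφ : φ = PowerSeries.mk fun n => if n = 0 then 1 else y n)
    (heq : scomp F (PowerSeries.X * (cpow φ p)⁻¹) =
      ∑ k ∈ Finset.Icc 1 m, a k • cpow φ (q k)) :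
    ∀ n : ℕ, 1 ≤ n →
      x n = ∑ k ∈ Finset.Icc 1 n,
        (∑ i ∈ Finset.Icc 1 m,
          a i * q i / ((n : ℂ) * p + q i) * gbinom ((n : ℂ) * p + q i) k) *
          ordBell n k y := by
  have hφ1 : constantCoeff φ = 1 := by simp [hφ, ← coeff_zero_eq_constantCoeff_apply]
  rw [inv_cpow hφ1] at heq
  intro n hn
  obtain ⟨M, rfl⟩ := Nat.exists_eq_add_of_le' hn
  have hx : ((M : ℂ) + 1) * x (M + 1) = ((M : ℂ) + 1) * ∑ i ∈ Icc 1 m,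
      a i * q i / ((M + 1) * p + q i) * coeff (M + 1) (cpow φ ((M + 1) * p + q i)) := by
    rw [show x (M + 1) = coeff (M + 1) F by simp [hF], ← coeff_derivative_scomp_mul_cpow hφ1 p,
      heq, map_sum, sum_mul, map_sum, mul_sum]
    refine sum_congr rfl fun i hi => ?_
    rw [Derivation.map_smul, smul_mul_assoc, map_smul, coeff_derivative_cpow_mul_cpow hφ1
      (by exact_mod_cast hnp (M + 1) hn i hi), smul_eq_mul]
    ring
  rw [mul_left_cancel₀ (Nat.cast_add_one_ne_zero M) hx, hφ]
  simp_rw [coeff_cpow_eq_sum_ordBell y _ hn, mul_sum, sum_mul]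
  rw [sum_comm]
  push_cast
  exact sum_congr rfl fun k _ => sum_congr rfl fun i _ => by ring

/-- If `F(t/φ(t)^p) = ∑_{k=1}^m a_k φ(t)^{q_k}` then
`x_n = ∑_{k=1}^n (∑_{i=1}^m (a_i q_i/(np+q_i)) binom(np+q_i, k)) B_{n,k}(y_1,…,y_{n-k+1})`. -/
theorem stmt3 (m : ℕ) (hm : 1 ≤ m) (p : ℂ) (hp : p ≠ 0) (a q : ℕ → ℂ)
    (hsum : ∑ k ∈ Finset.Icc 1 m, a k = 0)
    (hc1 : ∑ k ∈ Finset.Icc 1 m, a k * q k ≠ 0)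
    (hnp : ∀ n : ℕ, 1 ≤ n → ∀ i ∈ Finset.Icc 1 m, (n : ℂ) * p + q i ≠ 0)
    (x y : ℕ → ℂ) (F φ : PowerSeries ℂ)
    (hF : F = PowerSeries.mk fun n => if n = 0 then 0 else x n)
    (hφ : φ = PowerSeries.mk fun n => if n = 0 then 1 else y n)
    (heq : scomp F (PowerSeries.X * (cpow φ p)⁻¹) =
      ∑ k ∈ Finset.Icc 1 m, a k • cpow φ (q k)) :
    ∀ n : ℕ, 1 ≤ n →
      x n = ∑ k ∈ Finset.Icc 1 n,
        (∑ i ∈ Finset.Icc 1 m,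
          a i * q i / ((n : ℂ) * p + q i) * gbinom ((n : ℂ) * p + q i) k) *
          ordBell n k y :=
  stmt3_general m p a q hnp x y F φ hF hφ heq
end
end

section
/- With f_n(s) as defined by the recurrence f_1(s)=1, f_{n+1}(s) = ps f_n(s) + (1/c_1) \sum_{k=1}^3 a_k q_k^2 \sum_{i=1}^n binom(n,i) f_i(-q_k/p) f_{n+1-i}(s), and c_j := a_1 q_1^j + a_2 q_2^j + a_3 q_3^j, one has f_2(s) = ps + c_2/c_1, f_3(s) = (ps)^2 + 3(c_2/c_1) ps + (3c_2^2 - c_1 c_3)/c_1^2, and f_4(s) = (ps)^3 + 6(c_2/c_1)(ps)^2 + ((15 c_2^2 - 4 c_1 c_3)/c_1^2) ps + (15 c_2^3 - 10 c_1 c_2 c_3 + c_1^2 c_4)/c_1^3. -/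
/-! Interchanging the two sums in the recurrence gives
`f_{n+1}(s) = ps f_n(s) + c₁⁻¹ ∑_{i=1}^n binom(n,i) m_i f_{n+1-i}(s)` with the moments
`m_i = ∑_k a_k q_k² f_i(-q_k/p)`. As `f_i(s)` is a polynomial of degree `i - 1` in `ps`, evaluating
it at `s = -q_k/p` turns `m_i` into a linear combination of `c_2, …, c_{i+1}`, and `f_2, f_3, f_4`
follow by unrolling the recurrence three times. -/

open PowerSeries Finset
noncomputable section

def BinomialRecurrence (p : ℂ) (a q c : ℕ → ℂ) (f : ℕ → ℂ → ℂ) : Prop :=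
  ∀ n : ℕ, 1 ≤ n → ∀ s : ℂ,
    f (n + 1) s = p * s * f n s + (1 / c 1) *
      ∑ k ∈ Finset.Icc 1 3, a k * (q k) ^ 2 *
        ∑ i ∈ Finset.Icc 1 n, (n.choose i : ℂ) * f i (-(q k) / p) * f (n + 1 - i) s

def moment (p : ℂ) (a q : ℕ → ℂ) (g : ℂ → ℂ) : ℂ :=
  ∑ k ∈ Finset.Icc 1 3, a k * q k ^ 2 * g (-(q k) / p)

section

variable {p : ℂ} {a q c : ℕ → ℂ} {f : ℕ → ℂ → ℂ}

theorem moment_eq (g : ℂ → ℂ) :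
    moment p a q g = a 1 * q 1 ^ 2 * g (-(q 1) / p) + a 2 * q 2 ^ 2 * g (-(q 2) / p) +
      a 3 * q 3 ^ 2 * g (-(q 3) / p) := by
  rw [moment, Finset.sum_Icc_succ_top (by norm_num), Finset.sum_Icc_succ_top (by norm_num),
    Icc_self, sum_singleton]

theorem moment_of_forall_eq_one (hc : ∀ j : ℕ, c j = a 1 * q 1 ^ j + a 2 * q 2 ^ j + a 3 * q 3 ^ j)
    {g : ℂ → ℂ} (hg : ∀ t, g t = 1) :
    moment p a q g = c 2 := by
  simp only [moment_eq, hg, hc]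
  ring

theorem moment_eq_of_quadratic (hp : p ≠ 0)
    (hc : ∀ j : ℕ, c j = a 1 * q 1 ^ j + a 2 * q 2 ^ j + a 3 * q 3 ^ j)
    {g : ℂ → ℂ} {α β γ : ℂ} (hg : ∀ t, g t = α + β * (p * t) + γ * (p * t) ^ 2) :
    moment p a q g = α * c 2 - β * c 3 + γ * c 4 := by
  simp only [moment_eq, hg, mul_div_cancel₀ _ hp, hc]
  ring

namespace BinomialRecurrence

theorem apply_succ (hrec : BinomialRecurrence p a q c f) {n : ℕ} (hn : 1 ≤ n) (s : ℂ) :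
    f (n + 1) s = p * s * f n s + (1 / c 1) *
      ∑ i ∈ Finset.Icc 1 n, (n.choose i : ℂ) * moment p a q (f i) * f (n + 1 - i) s := by
  simp only [hrec n hn s, moment, Finset.mul_sum, Finset.sum_mul]
  rw [Finset.sum_comm]
  congr 2 with i
  exact Finset.sum_congr rfl fun k _ => by ring

theorem apply_two (hc : ∀ j : ℕ, c j = a 1 * q 1 ^ j + a 2 * q 2 ^ j + a 3 * q 3 ^ j)
    (hf1 : ∀ s, f 1 s = 1) (hrec : BinomialRecurrence p a q c f) (s : ℂ) :
    f 2 s = p * s + c 2 / c 1 := by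
  rw [hrec.apply_succ le_rfl, Icc_self, sum_singleton, moment_of_forall_eq_one hc hf1, hf1,
    Nat.choose_self]
  ring

theorem moment_two (hp : p ≠ 0)
    (hc : ∀ j : ℕ, c j = a 1 * q 1 ^ j + a 2 * q 2 ^ j + a 3 * q 3 ^ j)
    (hf1 : ∀ s, f 1 s = 1) (hrec : BinomialRecurrence p a q c f) :
    moment p a q (f 2) = c 2 / c 1 * c 2 - c 3 := by
  simpa using moment_eq_of_quadratic (g := f 2) (β := 1) (γ := 0) hp hc
    (fun t => by rw [hrec.apply_two hc hf1]; ring)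

theorem apply_three (hp : p ≠ 0)
    (hc : ∀ j : ℕ, c j = a 1 * q 1 ^ j + a 2 * q 2 ^ j + a 3 * q 3 ^ j)
    (hf1 : ∀ s, f 1 s = 1) (hrec : BinomialRecurrence p a q c f) (s : ℂ) :
    f 3 s = (p * s) ^ 2 + 3 * (c 2 / c 1) * (p * s) +
        (3 * (c 2) ^ 2 - c 1 * c 3) / (c 1) ^ 2 := by
  rw [hrec.apply_succ (n := 2) (by norm_num), Finset.sum_Icc_succ_top (by norm_num), Icc_self,
    sum_singleton, moment_of_forall_eq_one hc hf1, hrec.moment_two hp hc hf1, hf1,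
    hrec.apply_two hc hf1]
  have hcancel : (c 1)⁻¹ * c 1 * (c 1)⁻¹ = (c 1)⁻¹ := by simpa using mul_inv_mul_cancel (c 1)⁻¹
  norm_num
  linear_combination c 3 * hcancel

theorem apply_four (hp : p ≠ 0)
    (hc : ∀ j : ℕ, c j = a 1 * q 1 ^ j + a 2 * q 2 ^ j + a 3 * q 3 ^ j)
    (hf1 : ∀ s, f 1 s = 1) (hrec : BinomialRecurrence p a q c f) (s : ℂ) :
    f 4 s = (p * s) ^ 3 + 6 * (c 2 / c 1) * (p * s) ^ 2 +
        ((15 * (c 2) ^ 2 - 4 * c 1 * c 3) / (c 1) ^ 2) * (p * s) +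
        (15 * (c 2) ^ 3 - 10 * c 1 * c 2 * c 3 + (c 1) ^ 2 * c 4) / (c 1) ^ 3 := by
  have moment_three : moment p a q (f 3) =
      (3 * (c 2) ^ 2 - c 1 * c 3) / (c 1) ^ 2 * c 2 - 3 * (c 2 / c 1) * c 3 + c 4 := by
    simpa using moment_eq_of_quadratic (g := f 3) (γ := 1) hp hc
      (fun t => by rw [hrec.apply_three hp hc hf1]; ring)
  rw [hrec.apply_succ (n := 3) (by norm_num), Finset.sum_Icc_succ_top (by norm_num),
    Finset.sum_Icc_succ_top (by norm_num), Icc_self, sum_singleton,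
    moment_of_forall_eq_one hc hf1, hrec.moment_two hp hc hf1, moment_three, hf1,
    hrec.apply_two hc hf1, hrec.apply_three hp hc hf1]
  have hcancel : (c 1)⁻¹ * c 1 * (c 1)⁻¹ = (c 1)⁻¹ := by simpa using mul_inv_mul_cancel (c 1)⁻¹
  norm_num
  linear_combination
    (3 * p * s * c 3 + 6 * c 2 * c 3 * (c 1)⁻¹ - c 4 * (c 1 * (c 1)⁻¹ + 1)) * hcancel

end BinomialRecurrence

end

theorem stmt15_general (p : ℂ) (hp : p ≠ 0) (a q : ℕ → ℂ)
    (c : ℕ → ℂ)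
    (hc : ∀ j : ℕ, c j = a 1 * q 1 ^ j + a 2 * q 2 ^ j + a 3 * q 3 ^ j)
    (f : ℕ → ℂ → ℂ) (hf1 : ∀ s : ℂ, f 1 s = 1)
    (hrec : ∀ n : ℕ, 1 ≤ n → ∀ s : ℂ,
      f (n + 1) s = p * s * f n s + (1 / c 1) *
        ∑ k ∈ Finset.Icc 1 3, a k * (q k) ^ 2 *
          ∑ i ∈ Finset.Icc 1 n, (n.choose i : ℂ) * f i (-(q k) / p) * f (n + 1 - i) s) :
    ∀ s : ℂ,
      f 2 s = p * s + c 2 / c 1 ∧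
      f 3 s = (p * s) ^ 2 + 3 * (c 2 / c 1) * (p * s) +
        (3 * (c 2) ^ 2 - c 1 * c 3) / (c 1) ^ 2 ∧
      f 4 s = (p * s) ^ 3 + 6 * (c 2 / c 1) * (p * s) ^ 2 +
        ((15 * (c 2) ^ 2 - 4 * c 1 * c 3) / (c 1) ^ 2) * (p * s) +
        (15 * (c 2) ^ 3 - 10 * c 1 * c 2 * c 3 + (c 1) ^ 2 * c 4) / (c 1) ^ 3 :=
  fun s => ⟨BinomialRecurrence.apply_two hc hf1 hrec s,
    BinomialRecurrence.apply_three hp hc hf1 hrec s,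
    BinomialRecurrence.apply_four hp hc hf1 hrec s⟩

/-- Explicit values `f_2`, `f_3`, `f_4` of the polynomials `f_n(s)` defined by the
recurrence `f_1(s)=1`,
`f_{n+1}(s) = ps f_n(s) + (1/c₁) ∑_{k=1}^3 a_k q_k² ∑_{i=1}^n binom(n,i) f_i(-q_k/p) f_{n+1-i}(s)`. -/
theorem stmt15 (p : ℂ) (hp : p ≠ 0) (a q : ℕ → ℂ)
    (hsum : a 1 + a 2 + a 3 = 0) (c : ℕ → ℂ)
    (hc : ∀ j : ℕ, c j = a 1 * q 1 ^ j + a 2 * q 2 ^ j + a 3 * q 3 ^ j)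
    (hc₁ : c 1 ≠ 0)
    (f : ℕ → ℂ → ℂ) (hf1 : ∀ s : ℂ, f 1 s = 1)
    (hrec : ∀ n : ℕ, 1 ≤ n → ∀ s : ℂ,
      f (n + 1) s = p * s * f n s + (1 / c 1) *
        ∑ k ∈ Finset.Icc 1 3, a k * (q k) ^ 2 *
          ∑ i ∈ Finset.Icc 1 n, (n.choose i : ℂ) * f i (-(q k) / p) * f (n + 1 - i) s) :
    ∀ s : ℂ,
      f 2 s = p * s + c 2 / c 1 ∧
      f 3 s = (p * s) ^ 2 + 3 * (c 2 / c 1) * (p * s) +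
        (3 * (c 2) ^ 2 - c 1 * c 3) / (c 1) ^ 2 ∧
      f 4 s = (p * s) ^ 3 + 6 * (c 2 / c 1) * (p * s) ^ 2 +
        ((15 * (c 2) ^ 2 - 4 * c 1 * c 3) / (c 1) ^ 2) * (p * s) +
        (15 * (c 2) ^ 3 - 10 * c 1 * c 2 * c 3 + (c 1) ^ 2 * c 4) / (c 1) ^ 3 :=
  stmt15_general p hp a q c hc f hf1 hrec
end
end

section
/- Let \chi_n(k) for n \ge 1, 0 \le k \le n-1 be defined by f_n(s) = \sum_{k=0}^{n-1} \chi_n(k) (ps)^k, where f_n satisfies the m=3 recurrence above and each f_n is a polynomial in ps of degree n-1 with leading coefficient 1. Then the \chi satisfy: for all 0 \le m \le n, \sum_{k=0}^{n} \chi_{n+1}(k) binom(k,m) (-1)^{k-m} c_{k-m+1} = c_1 \chi_n(m-1), where \chi_n(-1) := 0 and c_j = a_1 q_1^j + a_2 q_2^j + a_3 q_3^j. -/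
/-!
For `w : ℂ` consider the exponential generating functions `A_w = ∑ f_{n+1}(w) tⁿ/n!`
(`succEGF`), `G_w = 1 + ∑_{n ≥ 1} p w f_n(w) tⁿ/n!` (`expEGF`) and
`u = 1 - ∑_{n ≥ 1} δ_n tⁿ/n!` (`kernelEGF`), where `δ_n = c₁⁻¹ ∑_k a_k q_k² f_n(-q_k/p)`
(`weightedKernel`). The recurrence says exactly `u A_w = G_w`, so
`G_w' = p w u⁻¹ G_w`: formally `G_w = exp (p w g)` with `g' = u⁻¹`. Uniqueness for this linear
differential equation gives `G_{s+v} = G_s G_v`, hence `A_{s+v} = G_s A_v`. At the points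
`w_k = -q_k/p` a direct comparison of coefficients gives `∑_k a_k q_k G_{w_k} = c₁ u`, so
`∑_k a_k q_k A_{w_k} = c₁` and therefore `∑_k a_k q_k A_{s + w_k} = c₁ G_s`. In degree `n` this is
`∑_k a_k q_k f_{n+1}(s - q_k/p) = c₁ p s f_n(s)`, a polynomial identity in `p s` whose coefficient
of `(p s)^m` is the claim.
-/

open PowerSeries Finset
noncomputable section

open scoped Nat

section EGF

variable {K : Type*} [Field K]

def egf : (ℕ → K) →ₗ[K] K⟦X⟧ where
  toFun x := mk fun n => x n / (n ! : K)
  map_add' x y := by ext n; simp [add_div]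
  map_smul' c x := by ext n; simp [mul_div_assoc]

@[simp] theorem coeff_egf (x : ℕ → K) (n : ℕ) : coeff n (egf x) = x n / (n ! : K) := by
  simp [egf]

@[simp] theorem constantCoeff_egf (x : ℕ → K) : constantCoeff (egf x) = x 0 := by
  simp [← coeff_zero_eq_constantCoeff_apply]

variable [CharZero K]

theorem egf_injective : Function.Injective (egf : (ℕ → K) → K⟦X⟧) := by
  intro x y h
  funext n
  have hn : (n ! : K) ≠ 0 := Nat.cast_ne_zero.2 n.factorial_ne_zero
  simpa [div_left_inj' hn] using congrArg (coeff n) h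

theorem egf_mul (x y : ℕ → K) :
    egf x * egf y = egf fun n => ∑ k ∈ range (n + 1), (n.choose k : K) * x k * y (n - k) := by
  ext n
  rw [coeff_mul,
    Nat.sum_antidiagonal_eq_sum_range_succ fun i j => coeff i (egf x) * coeff j (egf y),
    coeff_egf, sum_div]
  refine sum_congr rfl fun k hk => ?_
  have hkn : k ≤ n := Nat.lt_succ_iff.1 (mem_range.1 hk)
  have hn : (n ! : K) ≠ 0 := Nat.cast_ne_zero.2 n.factorial_ne_zero
  rw [coeff_egf, coeff_egf, Nat.cast_choose K hkn]
  field_simp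

theorem derivative_egf (x : ℕ → K) : d⁄dX K (egf x) = egf fun n => x (n + 1) := by
  ext n
  rw [coeff_derivative, coeff_egf, coeff_egf, Nat.factorial_succ]
  push_cast
  field_simp

end EGF

theorem PowerSeries.eq_of_derivative_eq_mul {R : Type*} [CommRing R] [IsDomain R] [CharZero R]
    {r F G : R⟦X⟧} (hF : d⁄dX R F = r * F) (hG : d⁄dX R G = r * G)
    (h0 : constantCoeff F = constantCoeff G) : F = G := by
  rw [← sub_eq_zero]
  set W := F - G
  have hW : d⁄dX R W = r * W := by simp only [W, map_sub, hF, hG, mul_sub]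
  suffices ∀ n, ∀ m ≤ n, coeff m W = 0 by ext n; simpa using this n n le_rfl
  intro n
  induction n with
  | zero => intro m hm; simp [Nat.le_zero.1 hm, W, h0]
  | succ n ih =>
    intro m hm
    rcases Nat.of_le_succ hm with hm | rfl
    · exact ih m hm
    have hcoeff : coeff (n + 1) W * (n + 1) = 0 := by
      rw [← coeff_derivative, hW, coeff_mul]
      exact sum_eq_zero fun ij hij => by
        rw [ih ij.2 (HasAntidiagonal.antidiagonal.snd_le hij), mul_zero]
    simpa [Nat.cast_add_one_ne_zero] using hcoeff

theorem sum_Icc_one_eq_sum_range {M : Type*} [AddCommMonoid M] (g : ℕ → M) (n : ℕ) :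
    ∑ i ∈ Icc 1 n, g i = ∑ k ∈ range n, g (k + 1) := by
  induction n with
  | zero => simp
  | succ n ih => rw [sum_Icc_succ_top (by omega), ih, sum_range_succ]

section BinomialType

variable (p : ℂ) (f : ℕ → ℂ → ℂ) (δ : ℕ → ℂ)

def succEGF (w : ℂ) : ℂ⟦X⟧ := egf fun n => f (n + 1) w

def expEGF (w : ℂ) : ℂ⟦X⟧ := egf fun n => if n = 0 then 1 else p * w * f n w

def kernelEGF : ℂ⟦X⟧ := egf fun n => if n = 0 then 1 else -δ n

structure ConvRecurrence : Prop where
  one : ∀ s, f 1 s = 1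
  succ : ∀ n, 1 ≤ n → ∀ s,
    f (n + 1) s = p * s * f n s + ∑ i ∈ Icc 1 n, (n.choose i : ℂ) * δ i * f (n + 1 - i) s

variable {p f δ}

theorem constantCoeff_kernelEGF : constantCoeff (kernelEGF δ) = 1 := by
  simp [kernelEGF]

theorem kernelEGF_ne_zero : kernelEGF δ ≠ 0 := fun h0 =>
  one_ne_zero (by rw [← constantCoeff_kernelEGF, h0, map_zero])

theorem constantCoeff_expEGF (w : ℂ) : constantCoeff (expEGF p f w) = 1 := by
  simp [expEGF]

theorem derivative_expEGF (w : ℂ) : d⁄dX ℂ (expEGF p f w) = C (p * w) * succEGF f w := by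
  rw [expEGF, succEGF, derivative_egf, ← smul_eq_C_mul, ← map_smul]
  refine congrArg egf (funext fun n => ?_)
  simp [mul_assoc]

theorem kernelEGF_mul_succEGF (h : ConvRecurrence p f δ) (w : ℂ) :
    kernelEGF δ * succEGF f w = expEGF p f w := by
  rw [kernelEGF, succEGF, expEGF, egf_mul]
  refine congrArg egf (funext fun n => ?_)
  rw [sum_range_succ']
  rcases n with _ | n
  · simp [h.one]
  · have hconv : ∑ k ∈ range (n + 1),
          ((n + 1).choose (k + 1) : ℂ) * -δ (k + 1) * f (n + 1 - (k + 1) + 1) w =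
        -∑ i ∈ Icc 1 (n + 1), ((n + 1).choose i : ℂ) * δ i * f (n + 1 + 1 - i) w := by
      rw [sum_Icc_one_eq_sum_range, ← sum_neg_distrib]
      refine sum_congr rfl fun k hk => ?_
      rw [show n + 1 - (k + 1) + 1 = n + 1 + 1 - (k + 1) by grind]
      ring
    simp only [Nat.add_one_ne_zero, ↓reduceIte, Nat.choose_zero_right, Nat.cast_one, one_mul,
      Nat.sub_zero, hconv, h.succ (n + 1) (Nat.le_add_left 1 n)]
    ring

theorem succEGF_eq_expEGF_mul_inv (h : ConvRecurrence p f δ) (w : ℂ) :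
    succEGF f w = expEGF p f w * (kernelEGF δ)⁻¹ := by
  rw [eq_mul_inv_iff_mul_eq (by simp [constantCoeff_kernelEGF]), mul_comm]
  exact kernelEGF_mul_succEGF h w

theorem derivative_expEGF_eq_mul (h : ConvRecurrence p f δ) (w : ℂ) :
    d⁄dX ℂ (expEGF p f w) = C (p * w) * (kernelEGF δ)⁻¹ * expEGF p f w := by
  rw [derivative_expEGF, succEGF_eq_expEGF_mul_inv h]
  ring

theorem expEGF_add (h : ConvRecurrence p f δ) (s v : ℂ) :
    expEGF p f (s + v) = expEGF p f s * expEGF p f v := by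
  refine eq_of_derivative_eq_mul (derivative_expEGF_eq_mul h _) ?_ (by simp [constantCoeff_expEGF])
  rw [Derivation.leibniz, derivative_expEGF_eq_mul h, derivative_expEGF_eq_mul h, smul_eq_mul,
    smul_eq_mul, mul_add, map_add]
  ring

theorem succEGF_add (h : ConvRecurrence p f δ) (s v : ℂ) :
    succEGF f (s + v) = expEGF p f s * succEGF f v := by
  rw [succEGF_eq_expEGF_mul_inv h, succEGF_eq_expEGF_mul_inv h, expEGF_add h]
  ring

end BinomialType

section WeightedKernel

variable {ι : Type*} (p c₁ : ℂ) (K : Finset ι) (a q : ι → ℂ) (f : ℕ → ℂ → ℂ)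

def weightedKernel (n : ℕ) : ℂ := 1 / c₁ * ∑ k ∈ K, a k * q k ^ 2 * f n (-q k / p)

variable {p c₁ K a q f}

theorem convRecurrence_weightedKernel (hf1 : ∀ s, f 1 s = 1)
    (hrec : ∀ n, 1 ≤ n → ∀ s, f (n + 1) s = p * s * f n s + 1 / c₁ *
      ∑ k ∈ K, a k * q k ^ 2 * ∑ i ∈ Icc 1 n, (n.choose i : ℂ) * f i (-q k / p) * f (n + 1 - i) s) :
    ConvRecurrence p f (weightedKernel p c₁ K a q f) where
  one := hf1
  succ n hn s := by
    simp only [hrec n hn s, weightedKernel, mul_sum, sum_mul]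
    rw [sum_comm]
    congr 1
    refine sum_congr rfl fun i _ => sum_congr rfl fun k _ => ?_
    ring

theorem sum_smul_succEGF_neg_div (hp : p ≠ 0) (hc : ∑ k ∈ K, a k * q k = c₁) (hc₁ : c₁ ≠ 0)
    (h : ConvRecurrence p f (weightedKernel p c₁ K a q f)) :
    ∑ k ∈ K, (a k * q k) • succEGF f (-q k / p) = C c₁ := by
  have hsum : ∑ k ∈ K, (a k * q k) • expEGF p f (-q k / p) =
      c₁ • kernelEGF (weightedKernel p c₁ K a q f) := by
    simp only [expEGF, kernelEGF, ← map_smul, ← map_sum]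
    refine congrArg egf (funext fun n => ?_)
    rcases n with _ | n
    · simpa using hc
    · simp only [Finset.sum_apply, Pi.smul_apply, smul_eq_mul, Nat.add_one_ne_zero, ↓reduceIte,
        weightedKernel]
      field_simp
      rw [sum_neg_distrib]
  refine mul_left_cancel₀ (kernelEGF_ne_zero (δ := weightedKernel p c₁ K a q f)) ?_
  simp_rw [mul_sum, mul_smul_comm, kernelEGF_mul_succEGF h]
  rw [hsum, smul_eq_C_mul, mul_comm]

theorem sum_smul_succEGF_sub_div (hp : p ≠ 0) (hc : ∑ k ∈ K, a k * q k = c₁) (hc₁ : c₁ ≠ 0)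
    (h : ConvRecurrence p f (weightedKernel p c₁ K a q f)) (s : ℂ) :
    ∑ k ∈ K, (a k * q k) • succEGF f (s - q k / p) = c₁ • expEGF p f s := by
  simp_rw [sub_eq_add_neg, ← neg_div, succEGF_add h, ← mul_smul_comm]
  rw [← mul_sum, sum_smul_succEGF_neg_div hp hc hc₁ h, smul_eq_C_mul, mul_comm]

theorem sum_mul_succ_sub_div_eq (hp : p ≠ 0) (hc : ∑ k ∈ K, a k * q k = c₁) (hc₁ : c₁ ≠ 0)
    (h : ConvRecurrence p f (weightedKernel p c₁ K a q f)) {n : ℕ} (hn : 1 ≤ n) (s : ℂ) :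
    ∑ k ∈ K, a k * q k * f (n + 1) (s - q k / p) = c₁ * (p * s) * f n s := by
  have hcoeff := congrFun (egf_injective (by
    simpa only [succEGF, expEGF, ← map_smul, ← map_sum] using
      sum_smul_succEGF_sub_div hp hc hc₁ h s)) n
  simpa [Nat.one_le_iff_ne_zero.1 hn, mul_assoc] using hcoeff

end WeightedKernel

theorem coeff_X_mul_sum_C_mul_X_pow (R : ℕ → ℂ) {n m : ℕ} (hm : m ≤ n) :
    (Polynomial.X * ∑ k ∈ range n, Polynomial.C (R k) * Polynomial.X ^ k).coeff m =
      if m = 0 then 0 else R (m - 1) := by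
  rcases m with _ | m
  · simp
  · simp [Polynomial.coeff_X_mul, Polynomial.finsetSum_coeff, Nat.lt_of_succ_le hm]

theorem sum_mul_choose_eq_of_forall_eval {ι : Type*} (K : Finset ι) (b r : ι → ℂ) (c₁ : ℂ)
    (P R : ℕ → ℂ) {n m : ℕ} (hm : m ≤ n)
    (h : ∀ u, ∑ j ∈ K, b j * ∑ k ∈ range (n + 1), P k * (u - r j) ^ k =
      c₁ * u * ∑ k ∈ range n, R k * u ^ k) :
    ∑ k ∈ range (n + 1), P k * (k.choose m : ℂ) * ∑ j ∈ K, b j * (-r j) ^ (k - m) =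
      c₁ * (if m = 0 then 0 else R (m - 1)) := by
  have hpoly : ∑ j ∈ K, Polynomial.C (b j) * ∑ k ∈ range (n + 1),
        Polynomial.C (P k) * (Polynomial.X + Polynomial.C (-r j)) ^ k =
      Polynomial.C c₁ * (Polynomial.X * ∑ k ∈ range n, Polynomial.C (R k) * Polynomial.X ^ k) := by
    refine Polynomial.funext fun u => ?_
    simpa [Polynomial.eval_finsetSum, sub_eq_add_neg, mul_assoc] using h u
  have hcoeff := congrArg (Polynomial.coeff · m) hpoly
  simp only [Polynomial.finsetSum_coeff, Polynomial.coeff_C_mul, Polynomial.coeff_X_add_C_pow,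
    coeff_X_mul_sum_C_mul_X_pow R hm] at hcoeff
  rw [← hcoeff]
  simp only [mul_sum]
  rw [sum_comm]
  exact sum_congr rfl fun j _ => sum_congr rfl fun k _ => by ring

theorem stmt16_general (p : ℂ) (hp : p ≠ 0) (a q : ℕ → ℂ)
    (c : ℕ → ℂ)
    (hc : ∀ j : ℕ, c j = a 1 * q 1 ^ j + a 2 * q 2 ^ j + a 3 * q 3 ^ j)
    (hc₁ : c 1 ≠ 0)
    (f : ℕ → ℂ → ℂ) (hf1 : ∀ s : ℂ, f 1 s = 1)
    (hrec : ∀ n : ℕ, 1 ≤ n → ∀ s : ℂ,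
      f (n + 1) s = p * s * f n s + (1 / c 1) *
        ∑ k ∈ Finset.Icc 1 3, a k * (q k) ^ 2 *
          ∑ i ∈ Finset.Icc 1 n, (n.choose i : ℂ) * f i (-(q k) / p) * f (n + 1 - i) s)
    (χ : ℕ → ℕ → ℂ)
    (hχ : ∀ n : ℕ, 1 ≤ n → ∀ s : ℂ,
      f n s = ∑ k ∈ Finset.range n, χ n k * (p * s) ^ k) :
    ∀ n : ℕ, 1 ≤ n → ∀ m : ℕ, m ≤ n →
      ∑ k ∈ Finset.range (n + 1),
          χ (n + 1) k * (k.choose m : ℂ) * (-1) ^ (k - m) * c (k - m + 1) =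
        c 1 * (if m = 0 then 0 else χ n (m - 1)) := by
  have hpow : ∀ j, ∑ k ∈ Icc 1 3, a k * q k ^ j = c j := fun j => by
    rw [hc j, show Icc 1 3 = {1, 2, 3} from rfl, sum_insert (by decide), sum_pair (by decide),
      add_assoc]
  intro n hn m hm
  have hshift := sum_mul_succ_sub_div_eq hp (by simpa using hpow 1) hc₁
    (convRecurrence_weightedKernel hf1 hrec) hn
  rw [← sum_mul_choose_eq_of_forall_eval (Icc 1 3) (fun k => a k * q k) q (c 1) (χ (n + 1)) (χ n)
    hm fun u => by simpa [hχ (n + 1) (by omega), hχ n hn, ← sub_div, mul_div_cancel₀ _ hp,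
      mul_assoc] using hshift (u / p)]
  refine sum_congr rfl fun k _ => ?_
  rw [← hpow, mul_sum, mul_sum]
  refine sum_congr rfl fun j _ => ?_
  rw [neg_pow, pow_succ]
  ring

/-- The coefficients `χ_n(k)` of `f_n(s) = ∑_{k=0}^{n-1} χ_n(k)(ps)^k` satisfy the
triangular system `∑_{k=0}^n χ_{n+1}(k) binom(k,m) (-1)^{k-m} c_{k-m+1} = c₁ χ_n(m-1)`. -/
theorem stmt16 (p : ℂ) (hp : p ≠ 0) (a q : ℕ → ℂ)
    (hsum : a 1 + a 2 + a 3 = 0) (c : ℕ → ℂ)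
    (hc : ∀ j : ℕ, c j = a 1 * q 1 ^ j + a 2 * q 2 ^ j + a 3 * q 3 ^ j)
    (hc₁ : c 1 ≠ 0)
    (f : ℕ → ℂ → ℂ) (hf1 : ∀ s : ℂ, f 1 s = 1)
    (hrec : ∀ n : ℕ, 1 ≤ n → ∀ s : ℂ,
      f (n + 1) s = p * s * f n s + (1 / c 1) *
        ∑ k ∈ Finset.Icc 1 3, a k * (q k) ^ 2 *
          ∑ i ∈ Finset.Icc 1 n, (n.choose i : ℂ) * f i (-(q k) / p) * f (n + 1 - i) s)
    (χ : ℕ → ℕ → ℂ)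
    (hχ : ∀ n : ℕ, 1 ≤ n → ∀ s : ℂ,
      f n s = ∑ k ∈ Finset.range n, χ n k * (p * s) ^ k)
    (hlead : ∀ n : ℕ, 1 ≤ n → χ n (n - 1) = 1) :
    ∀ n : ℕ, 1 ≤ n → ∀ m : ℕ, m ≤ n →
      ∑ k ∈ Finset.range (n + 1),
          χ (n + 1) k * (k.choose m : ℂ) * (-1) ^ (k - m) * c (k - m + 1) =
        c 1 * (if m = 0 then 0 else χ n (m - 1)) :=
  stmt16_general p hp a q c hc hc₁ f hf1 hrec χ hχ
end
end

section
/- (Convolution identity for the coefficients \chi) Let \chi_n(k) be the coefficient of (ps)^k in f_n(s) as above. Then for all 1 \le m \le n-1: 2(2^m - 1) \chi_n(m) = \sum_{i+j=m-1, i,j \ge 0} \sum_{k=1}^{n-1} binom(n,k) \chi_k(i) \chi_{n-k}(j). -/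
/-!
With `x = p s` and `F_k(x) = ∑ χ_k(i) x^i`, we have `λ_k(s) = x F_k(x) / (k! (-c₁)^k)`.
Additivity at `a = b = s` gives `λ_n(2s) - 2 λ_n(s) = ∑_{k=1}^{n-1} λ_k(s) λ_{n-k}(s)`, and after
cancelling `x / (n! (-c₁)^n)` this becomes `2 (F_n(2x) - F_n(x)) = x ∑_k binom(n,k) F_k(x) F_{n-k}(x)`
for every `x ≠ 0`, hence an identity of polynomials. Its coefficient of `x^m` is the claim.
-/

open PowerSeries Finset
noncomputable section

theorem sum_range_mul_sub_eq_two_mul_add_sum_Icc {R : Type*} [CommSemiring R] (a : ℕ → R)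
    (ha : a 0 = 1) {n : ℕ} (hn : 1 ≤ n) :
    ∑ k ∈ range (n + 1), a k * a (n - k) = 2 * a n + ∑ k ∈ Icc 1 (n - 1), a k * a (n - k) := by
  have hIcc : Icc 1 (n - 1) = Ico 1 n := by ext; simp; omega
  rw [sum_range_succ, range_eq_Ico, sum_eq_sum_Ico_succ_bot (by omega), ← hIcc, ha,
    Nat.sub_zero, Nat.sub_self, ha]
  ring

theorem Polynomial.eval_trunc_mk {R : Type*} [CommSemiring R] (a : ℕ → R) (k : ℕ) (x : R) :
    (trunc k (mk a)).eval x = ∑ i ∈ range k, a i * x ^ i := by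
  simp [Polynomial.eval, eval₂_trunc_eq_sum_range]

theorem Polynomial.coeff_trunc_mk_of_eq_zero {R : Type*} [CommSemiring R] {a : ℕ → R} {k : ℕ}
    (ha : ∀ i, k ≤ i → a i = 0) (i : ℕ) : (trunc k (mk a)).coeff i = a i := by
  rw [coeff_trunc, coeff_mk]
  split_ifs with h
  · rfl
  · exact (ha i (not_lt.1 h)).symm

/-- `scaledEval (-c₁) Q k (p * s)` is `λ_k(s)` when `f_k(s) = (Q k).eval (p * s)`. -/
def scaledEval {K : Type*} [Field K] (d : K) (Q : ℕ → Polynomial K) (k : ℕ) (y : K) : K :=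
  y / (k.factorial * d ^ k) * (Q k).eval y

namespace Polynomial

variable {K : Type*} [Field K] [CharZero K]

theorem scaledEval_mul_scaledEval (d : K) (hd : d ≠ 0) (Q : ℕ → K[X]) {k n : ℕ} (hk : k ≤ n)
    (y : K) :
    scaledEval d Q k y * scaledEval d Q (n - k) y =
      y / (n.factorial * d ^ n) * ((n.choose k : K) * (Q k).eval y * (Q (n - k)).eval y * y) := by
  have hpow : d ^ n = d ^ k * d ^ (n - k) := by rw [← pow_add, Nat.add_sub_cancel' hk]
  have hn : (n.factorial : K) ≠ 0 := Nat.cast_ne_zero.2 n.factorial_ne_zero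
  rw [scaledEval, scaledEval, Nat.cast_choose K hk, hpow]
  field_simp

theorem two_mul_comp_sub_eq_X_mul_sum (d : K) (hd : d ≠ 0) (Q : ℕ → K[X]) (n : ℕ)
    (h : ∀ y, scaledEval d Q n (2 * y) =
      2 * scaledEval d Q n y + ∑ k ∈ Icc 1 (n - 1), scaledEval d Q k y * scaledEval d Q (n - k) y) :
    2 * ((Q n).comp (C 2 * X) - Q n) =
      X * ∑ k ∈ Icc 1 (n - 1), C (n.choose k : K) * (Q k * Q (n - k)) := by
  refine eq_of_infinite_eval_eq _ _ ((Set.finite_singleton 0).infinite_compl.mono fun y hy0 => ?_)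
  have hc : y / (n.factorial * d ^ n) ≠ 0 := by
    have : (n.factorial : K) ≠ 0 := Nat.cast_ne_zero.2 n.factorial_ne_zero
    exact div_ne_zero hy0 (mul_ne_zero this (pow_ne_zero _ hd))
  have hy := h y
  rw [sum_congr rfl fun k hk => scaledEval_mul_scaledEval d hd Q (n := n) (by simp at hk; omega) y,
    ← mul_sum, scaledEval, scaledEval] at hy
  apply mul_left_cancel₀ hc
  simp only [eval_mul, eval_sub, eval_comp, eval_ofNat, eval_C, eval_X, eval_finsetSum]
  have hsum : y * ∑ k ∈ Icc 1 (n - 1), (n.choose k : K) * ((Q k).eval y * (Q (n - k)).eval y) =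
      ∑ k ∈ Icc 1 (n - 1), (n.choose k : K) * (Q k).eval y * (Q (n - k)).eval y * y := by
    rw [mul_sum]
    exact sum_congr rfl fun _ _ => by ring
  rw [hsum]
  linear_combination hy

theorem two_mul_two_pow_sub_one_mul_coeff_succ {R : Type*} [CommRing R] {Q : ℕ → R[X]} {n : ℕ}
    (h : 2 * ((Q n).comp (C 2 * X) - Q n) =
      X * ∑ k ∈ Icc 1 (n - 1), C (n.choose k : R) * (Q k * Q (n - k))) (m : ℕ) :
    2 * (2 ^ (m + 1) - 1) * (Q n).coeff (m + 1) =
      ∑ ij ∈ antidiagonal m, ∑ k ∈ Icc 1 (n - 1),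
        (n.choose k : R) * (Q k).coeff ij.1 * (Q (n - k)).coeff ij.2 := by
  have h := congrArg (coeff · (m + 1)) h
  rw [coeff_ofNat_mul, coeff_sub, comp_C_mul_X_coeff, coeff_X_mul, finsetSum_coeff] at h
  simp only [coeff_C_mul] at h
  simp only [coeff_mul, mul_sum, ← mul_assoc] at h
  rw [sum_comm]
  linear_combination h

end Polynomial

/-- Convolution identity:
`2(2^m - 1) χ_n(m) = ∑_{i+j=m-1} ∑_{k=1}^{n-1} binom(n,k) χ_k(i) χ_{n-k}(j)`. -/
theorem stmt17 (p c₁ : ℂ) (hp : p ≠ 0) (hc₁ : c₁ ≠ 0)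
    (lam : ℕ → ℂ → ℂ) (hlam0 : ∀ s : ℂ, lam 0 s = 1)
    (hadd : ∀ (a b : ℂ) (n : ℕ),
      lam n (a + b) = ∑ k ∈ Finset.range (n + 1), lam k a * lam (n - k) b)
    (f : ℕ → ℂ → ℂ)
    (hf : ∀ n : ℕ, 1 ≤ n → ∀ s : ℂ,
      lam n s = p * s / ((n.factorial : ℂ) * (-c₁) ^ n) * f n s)
    (χ : ℕ → ℕ → ℂ)
    (hχ : ∀ n : ℕ, 1 ≤ n → ∀ s : ℂ,
      f n s = ∑ k ∈ Finset.range n, χ n k * (p * s) ^ k)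
    (hχ0 : ∀ n k : ℕ, n ≤ k → χ n k = 0) :
    ∀ n m : ℕ, 1 ≤ m → m ≤ n - 1 →
      2 * ((2 : ℂ) ^ m - 1) * χ n m =
        ∑ ij ∈ Finset.HasAntidiagonal.antidiagonal (m - 1),
          ∑ k ∈ Finset.Icc 1 (n - 1), (n.choose k : ℂ) * χ k ij.1 * χ (n - k) ij.2 := by
  intro n m hm hmn
  set Q : ℕ → Polynomial ℂ := fun k => trunc k (mk (χ k))
  have hlam : ∀ k, 1 ≤ k → ∀ y, lam k (y / p) = scaledEval (-c₁) Q k y := by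
    intro k hk y
    rw [hf k hk, hχ k hk, mul_div_cancel₀ y hp, scaledEval, Polynomial.eval_trunc_mk]
  have hdouble : ∀ y, scaledEval (-c₁) Q n (2 * y) = 2 * scaledEval (-c₁) Q n y +
      ∑ k ∈ Icc 1 (n - 1), scaledEval (-c₁) Q k y * scaledEval (-c₁) Q (n - k) y := by
    intro y
    have h := sum_range_mul_sub_eq_two_mul_add_sum_Icc (fun k => lam k (y / p)) (hlam0 _)
      (n := n) (by omega)
    rw [← hadd, ← add_div, ← two_mul, hlam n (by omega), hlam n (by omega)] at h
    rw [h]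
    refine congrArg _ (sum_congr rfl fun k hk => ?_)
    rw [mem_Icc] at hk
    rw [hlam k hk.1, hlam (n - k) (by omega)]
  have hQ : ∀ k i, (Q k).coeff i = χ k i := fun k => Polynomial.coeff_trunc_mk_of_eq_zero (hχ0 k)
  obtain ⟨m, rfl⟩ : ∃ m', m = m' + 1 := ⟨m - 1, by omega⟩
  have hpoly := Polynomial.two_mul_comp_sub_eq_X_mul_sum (-c₁) (neg_ne_zero.2 hc₁) Q n hdouble
  simpa only [hQ, Nat.add_sub_cancel] using
    Polynomial.two_mul_two_pow_sub_one_mul_coeff_succ hpoly m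
end
end

section
/- (Second convolution identity) With the same \chi_n(k) as above, for all 1 \le m \le n-1: (m+1) \chi_n(m) = \sum_{k=m}^{n-1} binom(n,k) \chi_k(m-1) \chi_{n-k}(0). -/
/-!
The `λ_n` form a family of convolution polynomials in `s`, so differentiating
`λ_n(a + b) = ∑ λ_k(a) λ_{n-k}(b)` in `b` at `b = 0` gives `λ_n' = ∑_k λ_{n-k}'(0) λ_k`.
Comparing coefficients of `s^m`, with `[s^j] λ_N = p^j χ_N(j-1) / (N! (-c₁)^N)` and
`n! = binom(n,k) k! (n-k)!`, yields the identity.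
-/

open PowerSeries Finset
noncomputable section

open scoped Polynomial

section ConvolutionFamily

variable {R : Type*} [CommRing R]

def IsConvolutionFamily (P : ℕ → R[X]) : Prop :=
  ∀ n a b, (P n).eval (a + b) = ∑ k ∈ range (n + 1), (P k).eval a * (P (n - k)).eval b

variable [IsDomain R] [Infinite R] {P : ℕ → R[X]}

theorem IsConvolutionFamily.taylor_eq (hP : IsConvolutionFamily P) (n : ℕ) (a : R) :
    Polynomial.taylor a (P n) = ∑ k ∈ range (n + 1), Polynomial.C ((P k).eval a) * P (n - k) :=
  Polynomial.funext fun b => by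
    simp [Polynomial.taylor_eval, Polynomial.eval_finsetSum, add_comm b a, hP n a b]

theorem IsConvolutionFamily.derivative_eq (hP : IsConvolutionFamily P) (n : ℕ) :
    Polynomial.derivative (P n) =
      ∑ k ∈ range (n + 1), Polynomial.C ((P (n - k)).coeff 1) * P k :=
  Polynomial.funext fun a => by
    have h := congrArg (Polynomial.coeff · 1) (hP.taylor_eq n a)
    simp only [Polynomial.taylor_coeff_one, Polynomial.finsetSum_coeff,
      Polynomial.coeff_C_mul] at h
    simp [h, Polynomial.eval_finsetSum, mul_comm]

theorem IsConvolutionFamily.succ_mul_coeff_succ (hP : IsConvolutionFamily P) (n m : ℕ) :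
    ((m : R) + 1) * (P n).coeff (m + 1) =
      ∑ k ∈ range (n + 1), (P (n - k)).coeff 1 * (P k).coeff m := by
  have h := congrArg (Polynomial.coeff · m) (hP.derivative_eq n)
  simp only [Polynomial.coeff_derivative, Polynomial.finsetSum_coeff,
    Polynomial.coeff_C_mul] at h
  rw [mul_comm, h]

end ConvolutionFamily

section LamPoly

variable {K : Type*} [Field K]

-- The paper's `λ_N` as a polynomial in `s`.
def lamPoly (p c : K) (χ : ℕ → ℕ → K) (N : ℕ) : K[X] :=
  if N = 0 then 1
  else ∑ k ∈ range N,
    Polynomial.C (p ^ (k + 1) * χ N k / (N.factorial * (-c) ^ N)) * Polynomial.X ^ (k + 1)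

theorem coeff_lamPoly (p c : K) (χ : ℕ → ℕ → K) (N : ℕ) {j : ℕ} (hj : 0 < j) :
    (lamPoly p c χ N).coeff j =
      if j ≤ N then p ^ j * χ N (j - 1) / (N.factorial * (-c) ^ N) else 0 := by
  obtain ⟨i, rfl⟩ := Nat.exists_eq_add_one_of_ne_zero hj.ne'
  rcases Nat.eq_zero_or_pos N with rfl | hN
  · simp [lamPoly, Polynomial.coeff_one]
  · simp [lamPoly, hN.ne', Polynomial.finsetSum_coeff, Polynomial.coeff_X_pow]

theorem eval_lamPoly {p c : K} {χ : ℕ → ℕ → K} {lam : ℕ → K → K} {f : ℕ → K → K}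
    (hlam0 : ∀ s, lam 0 s = 1)
    (hf : ∀ n : ℕ, 1 ≤ n → ∀ s, lam n s = p * s / (n.factorial * (-c) ^ n) * f n s)
    (hχ : ∀ n : ℕ, 1 ≤ n → ∀ s, f n s = ∑ k ∈ range n, χ n k * (p * s) ^ k)
    (N : ℕ) (s : K) : (lamPoly p c χ N).eval s = lam N s := by
  rcases Nat.eq_zero_or_pos N with rfl | hN
  · simp [lamPoly, hlam0]
  · rw [hf N hN, hχ N hN, mul_sum]
    simp only [lamPoly, hN.ne', if_false, Polynomial.eval_finsetSum, Polynomial.eval_mul,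
      Polynomial.eval_C, Polynomial.eval_pow, Polynomial.eval_X]
    refine sum_congr rfl fun k _ => ?_
    ring

theorem div_mul_div_factorial_mul_pow [CharZero K] {c : K} (hc : c ≠ 0) {n k : ℕ} (hk : k ≤ n)
    (x y : K) :
    x / ((n - k).factorial * c ^ (n - k)) * (y / (k.factorial * c ^ k)) =
      n.choose k * x * y / (n.factorial * c ^ n) := by
  have hpow : c ^ n = c ^ k * c ^ (n - k) := by rw [← pow_add, Nat.add_sub_cancel' hk]
  have hchoose : (n.choose k : K) ≠ 0 := by exact_mod_cast (Nat.choose_pos hk).ne'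
  have := k.factorial_ne_zero
  have := (n - k).factorial_ne_zero
  rw [hpow, ← Nat.choose_mul_factorial_mul_factorial hk]
  push_cast
  field_simp

end LamPoly

theorem stmt18_general (p c₁ : ℂ) (hp : p ≠ 0) (hc₁ : c₁ ≠ 0)
    (lam : ℕ → ℂ → ℂ) (hlam0 : ∀ s : ℂ, lam 0 s = 1)
    (hadd : ∀ (a b : ℂ) (n : ℕ),
      lam n (a + b) = ∑ k ∈ Finset.range (n + 1), lam k a * lam (n - k) b)
    (f : ℕ → ℂ → ℂ)
    (hf : ∀ n : ℕ, 1 ≤ n → ∀ s : ℂ,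
      lam n s = p * s / ((n.factorial : ℂ) * (-c₁) ^ n) * f n s)
    (χ : ℕ → ℕ → ℂ)
    (hχ : ∀ n : ℕ, 1 ≤ n → ∀ s : ℂ,
      f n s = ∑ k ∈ Finset.range n, χ n k * (p * s) ^ k) :
    ∀ n m : ℕ, 1 ≤ m → m ≤ n - 1 →
      ((m : ℂ) + 1) * χ n m =
        ∑ k ∈ Finset.Icc m (n - 1), (n.choose k : ℂ) * χ k (m - 1) * χ (n - k) 0 := by
  intro n m hm hmn
  have hL : IsConvolutionFamily (lamPoly p c₁ χ) := fun N a b => by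
    simpa only [eval_lamPoly hlam0 hf hχ] using hadd a b N
  have key := hL.succ_mul_coeff_succ n m
  rw [coeff_lamPoly _ _ _ _ (by omega : 0 < m + 1), if_pos (by omega), Nat.add_sub_cancel] at key
  simp only [coeff_lamPoly _ _ _ _ Nat.one_pos, coeff_lamPoly _ _ _ _ hm, ite_zero_mul_ite_zero,
    ← sum_filter] at key
  have hrange : {k ∈ range (n + 1) | 1 ≤ n - k ∧ m ≤ k} = Icc m (n - 1) := by
    ext k; simp only [mem_filter, mem_range, mem_Icc]; omega
  have hterm : ∀ k ∈ Icc m (n - 1),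
      p ^ 1 * χ (n - k) 0 / ((n - k).factorial * (-c₁) ^ (n - k)) *
          (p ^ m * χ k (m - 1) / (k.factorial * (-c₁) ^ k)) =
        p ^ (m + 1) / (n.factorial * (-c₁) ^ n) * (n.choose k * χ k (m - 1) * χ (n - k) 0) := by
    intro k hk
    rw [div_mul_div_factorial_mul_pow (neg_ne_zero.mpr hc₁) (by grind)]
    ring
  rw [hrange, sum_congr rfl hterm, ← mul_sum] at key
  have hne : p ^ (m + 1) / (n.factorial * (-c₁) ^ n) ≠ 0 := by
    have := n.factorial_ne_zero
    have := neg_ne_zero.mpr hc₁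
    positivity
  refine mul_left_cancel₀ hne ?_
  rw [← key]
  ring

/-- Second convolution identity:
`(m+1) χ_n(m) = ∑_{k=m}^{n-1} binom(n,k) χ_k(m-1) χ_{n-k}(0)`. -/
theorem stmt18 (p c₁ : ℂ) (hp : p ≠ 0) (hc₁ : c₁ ≠ 0)
    (lam : ℕ → ℂ → ℂ) (hlam0 : ∀ s : ℂ, lam 0 s = 1)
    (hadd : ∀ (a b : ℂ) (n : ℕ),
      lam n (a + b) = ∑ k ∈ Finset.range (n + 1), lam k a * lam (n - k) b)
    (f : ℕ → ℂ → ℂ)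
    (hf : ∀ n : ℕ, 1 ≤ n → ∀ s : ℂ,
      lam n s = p * s / ((n.factorial : ℂ) * (-c₁) ^ n) * f n s)
    (χ : ℕ → ℕ → ℂ)
    (hχ : ∀ n : ℕ, 1 ≤ n → ∀ s : ℂ,
      f n s = ∑ k ∈ Finset.range n, χ n k * (p * s) ^ k)
    (hχ0 : ∀ n k : ℕ, n ≤ k → χ n k = 0) :
    ∀ n m : ℕ, 1 ≤ m → m ≤ n - 1 →
      ((m : ℂ) + 1) * χ n m =
        ∑ k ∈ Finset.Icc m (n - 1), (n.choose k : ℂ) * χ k (m - 1) * χ (n - k) 0 :=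
  stmt18_general p c₁ hp hc₁ lam hlam0 hadd f hf χ hχ
end
end
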